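/- Let h : (0,∞) → ℂ be measurable with ∫₀^∞ |h(ρ)| ρ dρ < ∞ and consider the isotropic divergence free wavelet ψ̂(ξ) = −i h(|ξ|) e_θ(ξ) with e_θ(ξ) = (ξ₂, −ξ₁)/|ξ|. Then its unitary inverse Fourier transform is again isotropic and tangential: for every x ∈ ℝ² \ {0}, (2π)^{−1} ∫_{ℝ²} ψ̂(ξ) e^{i⟨ξ,x⟩} dξ = h₁(|x|) e_θ(x), where h₁(r) = ∫₀^∞ h(ρ) J₁(ρ r) ρ dρ and J₁(z) = (1/2π) ∫₀^{2π} e^{i(z sin φ − φ)} dφ. In particular the spatial wavelet is an isotropic vortex field h₁(|x|) e_{θ_x}. -/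

import Mathlib

open MeasureTheory RealInnerProductSpace

/-- The Bessel function of the first kind of order `1`. -/
noncomputable def besselJ1 (z : ℝ) : ℂ :=
  (2 * Real.pi)⁻¹ • ∫ φ in (0 : ℝ)..(2 * Real.pi),
    Complex.exp (Complex.I * ((z * Real.sin φ - φ : ℝ) : ℂ))

/-- The angular unit vector `e_θ(ξ) = (ξ₂, -ξ₁)/|ξ|`, viewed as a complex vector. -/
noncomputable def eThetaC (ξ : EuclideanSpace ℝ (Fin 2)) : Fin 2 → ℂ :=
  ![((ξ 1 / ‖ξ‖ : ℝ) : ℂ), ((-ξ 0 / ‖ξ‖ : ℝ) : ℂ)]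

open Real

/-!
In polar coordinates `ξ = ρ (cos θ, sin θ)`, `x = r (cos α, sin α)` one has
`⟪ξ, x⟫ = ρ r cos (θ - α)` and `e_θ(ξ) = (sin θ, -cos θ)`, so by Fubini (justified by
`‖ψ̂(ξ)‖ ≤ |h(|ξ|)|`) the Fourier integral is a `ρ`-integral of the angular integrals
`∫ e^{i z cos (θ - α)} e_θ(θ) dθ` with `z = ρ r`. Rotating `θ` by `α - π/2` reduces these to
`∫₀^{2π} e^{i z sin φ} cos φ dφ = 0` (an exact derivative) and
`∫₀^{2π} e^{i z sin φ} sin φ dφ = 2π i J₁(z)` (the definition of `J₁`), giving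
`2π i J₁(ρ r) e_θ(α)`; the factor `-i` and the normalisation `(2π)⁻¹` leave `J₁(ρ r) e_θ(x)`.
At `x = 0` both sides vanish because `J₁(0) = 0`.
-/

theorem Function.Periodic.intervalIntegral_comp_sub {E : Type*} [NormedAddCommGroup E]
    [NormedSpace ℝ E] {f : ℝ → E} {T : ℝ} (hf : Function.Periodic f T) (a β : ℝ) :
    ∫ θ in a..a + T, f (θ - β) = ∫ t in (0 : ℝ)..T, f t := by
  rw [intervalIntegral.integral_comp_sub_right, add_sub_right_comm,
    hf.intervalIntegral_add_eq (a - β) 0, zero_add]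

theorem Function.Periodic.intervalIntegral_neg_pi_pi_comp_sub {E : Type*} [NormedAddCommGroup E]
    [NormedSpace ℝ E] {f : ℝ → E} (hf : Function.Periodic f (2 * π)) (β : ℝ) :
    ∫ θ in (-π)..π, f (θ - β) = ∫ t in (0 : ℝ)..2 * π, f t := by
  simpa [show -π + 2 * π = π by ring] using hf.intervalIntegral_comp_sub (-π) β

lemma integral_exp_mul_sin_mul_cos (z : ℝ) :
    ∫ φ in (0 : ℝ)..2 * π,
      Complex.exp (Complex.I * ((z * Real.sin φ : ℝ) : ℂ)) * Real.cos φ = 0 := by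
  rcases eq_or_ne z 0 with rfl | hz
  · simp only [Complex.ofReal_zero, mul_zero, zero_mul, Complex.exp_zero, one_mul]
    rw [intervalIntegral.integral_ofReal, integral_cos]
    simp
  have hderiv (φ : ℝ) :
      HasDerivAt (fun φ : ℝ => Complex.exp (Complex.I * ((z * Real.sin φ : ℝ) : ℂ)))
        (Complex.I * z
          * (Complex.exp (Complex.I * ((z * Real.sin φ : ℝ) : ℂ)) * Real.cos φ)) φ := by
    convert ((((Real.hasDerivAt_sin φ).const_mul z).ofReal_comp).const_mul Complex.I).cexp using 1
    push_cast
    ring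
  have hFTC := intervalIntegral.integral_eq_sub_of_hasDerivAt (fun φ _ => hderiv φ)
    (Continuous.intervalIntegrable (by fun_prop) 0 (2 * π))
  rw [intervalIntegral.integral_const_mul] at hFTC
  simpa [hz] using hFTC

lemma integral_exp_mul_sin_mul_sin_eq_besselJ1 (z : ℝ) :
    ∫ φ in (0 : ℝ)..2 * π,
      Complex.exp (Complex.I * ((z * Real.sin φ : ℝ) : ℂ)) * Real.sin φ
        = 2 * π * Complex.I * besselJ1 z := by
  have hsplit (φ : ℝ) : Complex.exp (Complex.I * ((z * Real.sin φ - φ : ℝ) : ℂ))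
      = Complex.exp (Complex.I * ((z * Real.sin φ : ℝ) : ℂ)) * Real.cos φ
        - Complex.I
          * (Complex.exp (Complex.I * ((z * Real.sin φ : ℝ) : ℂ)) * Real.sin φ) := by
    rw [show Complex.I * ((z * Real.sin φ - φ : ℝ) : ℂ)
        = Complex.I * ((z * Real.sin φ : ℝ) : ℂ) + (-φ : ℝ) * Complex.I by push_cast; ring,
      Complex.exp_add, Complex.exp_mul_I, ← Complex.ofReal_cos, ← Complex.ofReal_sin,
      Real.cos_neg, Real.sin_neg]
    push_cast
    ring
  have hJ : 2 * π * besselJ1 z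
      = -(Complex.I * ∫ φ in (0 : ℝ)..2 * π,
          Complex.exp (Complex.I * ((z * Real.sin φ : ℝ) : ℂ)) * Real.sin φ) := by
    have h2π : (2 * π : ℂ) ≠ 0 := by exact_mod_cast (by positivity : (2 * π : ℝ) ≠ 0)
    rw [besselJ1, Complex.real_smul, ← mul_assoc, Complex.ofReal_inv, Complex.ofReal_mul,
      Complex.ofReal_ofNat, mul_inv_cancel₀ h2π, one_mul]
    simp_rw [hsplit]
    rw [intervalIntegral.integral_sub (Continuous.intervalIntegrable (by fun_prop) _ _)
      (Continuous.intervalIntegrable (by fun_prop) _ _), intervalIntegral.integral_const_mul,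
      integral_exp_mul_sin_mul_cos, zero_sub]
  linear_combination (-Complex.I) * hJ + (∫ φ in (0 : ℝ)..2 * π,
          Complex.exp (Complex.I * ((z * Real.sin φ : ℝ) : ℂ)) * Real.sin φ) * Complex.I_mul_I

lemma besselJ1_zero : besselJ1 0 = 0 := by
  have h := integral_exp_mul_sin_mul_sin_eq_besselJ1 0
  simp only [Complex.ofReal_zero, mul_zero, zero_mul, Complex.exp_zero, one_mul] at h
  rw [intervalIntegral.integral_ofReal, integral_sin] at h
  simpa [Real.pi_ne_zero] using h

section Rotation

variable {g : ℝ → ℂ}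

lemma intervalIntegral_comp_sub_mul_sin (hg : Continuous g) (hper : Function.Periodic g (2 * π))
    (β : ℝ) :
    ∫ θ in (-π)..π, g (θ - β) * Real.sin θ
      = Real.cos β * (∫ t in (0 : ℝ)..2 * π, g t * Real.sin t)
        + Real.sin β * ∫ t in (0 : ℝ)..2 * π, g t * Real.cos t := by
  have hrot (θ : ℝ) : g (θ - β) * Real.sin θ
      = Real.cos β * (g (θ - β) * Real.sin (θ - β))
        + Real.sin β * (g (θ - β) * Real.cos (θ - β)) := by
    rw [← sub_add_cancel θ β, Real.sin_add, add_sub_cancel_right]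
    push_cast
    ring
  simp_rw [hrot]
  rw [intervalIntegral.integral_add (Continuous.intervalIntegrable (by fun_prop) _ _)
      (Continuous.intervalIntegrable (by fun_prop) _ _),
    intervalIntegral.integral_const_mul, intervalIntegral.integral_const_mul,
    Function.Periodic.intervalIntegral_neg_pi_pi_comp_sub (f := fun t => g t * Real.sin t)
      (fun t => by simp [hper t]),
    Function.Periodic.intervalIntegral_neg_pi_pi_comp_sub (f := fun t => g t * Real.cos t)
      (fun t => by simp [hper t])]

lemma intervalIntegral_comp_sub_mul_cos (hg : Continuous g) (hper : Function.Periodic g (2 * π))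
    (β : ℝ) :
    ∫ θ in (-π)..π, g (θ - β) * Real.cos θ
      = Real.cos β * (∫ t in (0 : ℝ)..2 * π, g t * Real.cos t)
        - Real.sin β * ∫ t in (0 : ℝ)..2 * π, g t * Real.sin t := by
  have hrot (θ : ℝ) : g (θ - β) * Real.cos θ
      = Real.cos β * (g (θ - β) * Real.cos (θ - β))
        - Real.sin β * (g (θ - β) * Real.sin (θ - β)) := by
    rw [← sub_add_cancel θ β, Real.cos_add, add_sub_cancel_right]
    push_cast
    ring
  simp_rw [hrot]
  rw [intervalIntegral.integral_sub (Continuous.intervalIntegrable (by fun_prop) _ _)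
      (Continuous.intervalIntegrable (by fun_prop) _ _),
    intervalIntegral.integral_const_mul, intervalIntegral.integral_const_mul,
    Function.Periodic.intervalIntegral_neg_pi_pi_comp_sub (f := fun t => g t * Real.sin t)
      (fun t => by simp [hper t]),
    Function.Periodic.intervalIntegral_neg_pi_pi_comp_sub (f := fun t => g t * Real.cos t)
      (fun t => by simp [hper t])]

end Rotation

noncomputable def angularUnit (θ : ℝ) : Fin 2 → ℂ :=
  ![(Real.sin θ : ℂ), -Real.cos θ]

lemma integral_exp_mul_cos_sub_smul_angularUnit (z α : ℝ) :
    ∫ θ in (-π)..π,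
      Complex.exp (Complex.I * ((z * Real.cos (θ - α) : ℝ) : ℂ)) • angularUnit θ
        = (2 * π * Complex.I * besselJ1 z) • angularUnit α := by
  let g : ℝ → ℂ := fun t => Complex.exp (Complex.I * ((z * Real.sin t : ℝ) : ℂ))
  have hg : Continuous g := by fun_prop
  have hper : Function.Periodic g (2 * π) := fun t => by simp only [g, Real.sin_add_two_pi]
  have hsplit (θ : ℝ) :
      Complex.exp (Complex.I * ((z * Real.cos (θ - α) : ℝ) : ℂ)) • angularUnit θ
        = (g (θ - (α - π / 2)) * Real.sin θ) • ![1, 0]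
          + (g (θ - (α - π / 2)) * Real.cos θ) • ![0, -1] := by
    simp only [g, show θ - (α - π / 2) = θ - α + π / 2 by ring, Real.sin_add_pi_div_two]
    ext i
    fin_cases i <;> simp [angularUnit]
  simp_rw [hsplit]
  rw [intervalIntegral.integral_add (Continuous.intervalIntegrable (by fun_prop) _ _)
      (Continuous.intervalIntegrable (by fun_prop) _ _),
    intervalIntegral.integral_smul_const, intervalIntegral.integral_smul_const,
    intervalIntegral_comp_sub_mul_sin hg hper, intervalIntegral_comp_sub_mul_cos hg hper]
  simp only [g]
  rw [integral_exp_mul_sin_mul_sin_eq_besselJ1, integral_exp_mul_sin_mul_cos,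
    Real.cos_sub_pi_div_two, Real.sin_sub_pi_div_two]
  ext i
  fin_cases i <;> simp [angularUnit, mul_comm]

noncomputable def polarPoint (ρ θ : ℝ) : EuclideanSpace ℝ (Fin 2) :=
  !₂[ρ * Real.cos θ, ρ * Real.sin θ]

@[simp] lemma polarPoint_apply_zero (ρ θ : ℝ) : polarPoint ρ θ 0 = ρ * Real.cos θ := rfl

@[simp] lemma polarPoint_apply_one (ρ θ : ℝ) : polarPoint ρ θ 1 = ρ * Real.sin θ := rfl

lemma norm_polarPoint {ρ : ℝ} (hρ : 0 ≤ ρ) (θ : ℝ) : ‖polarPoint ρ θ‖ = ρ := by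
  rw [EuclideanSpace.norm_eq, Fin.sum_univ_two]
  simp only [polarPoint_apply_zero, polarPoint_apply_one, Real.norm_eq_abs, sq_abs]
  conv_rhs => rw [← Real.sqrt_sq hρ]
  congr 1
  linear_combination ρ ^ 2 * Real.sin_sq_add_cos_sq θ

lemma inner_polarPoint_polarPoint (ρ θ r α : ℝ) :
    ⟪polarPoint ρ θ, polarPoint r α⟫ = ρ * r * Real.cos (θ - α) := by
  simp only [PiLp.inner_apply, Fin.sum_univ_two, RCLike.inner_apply, conj_trivial,
    polarPoint_apply_zero, polarPoint_apply_one, Real.cos_sub]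
  ring

lemma eThetaC_polarPoint {ρ : ℝ} (hρ : 0 < ρ) (θ : ℝ) :
    eThetaC (polarPoint ρ θ) = angularUnit θ := by
  rw [eThetaC, angularUnit, norm_polarPoint hρ.le, polarPoint_apply_zero, polarPoint_apply_one,
    mul_div_cancel_left₀ _ hρ.ne', neg_div, mul_div_cancel_left₀ _ hρ.ne', Complex.ofReal_neg]

lemma exists_eq_polarPoint (x : EuclideanSpace ℝ (Fin 2)) :
    ∃ r α : ℝ, 0 ≤ r ∧ x = polarPoint r α := by
  set z : ℂ := x 0 + x 1 * Complex.I
  have hz : ‖z‖ = ‖x‖ := by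
    rw [Complex.norm_add_mul_I, EuclideanSpace.norm_eq, Fin.sum_univ_two]
    simp
  refine ⟨‖x‖, Complex.arg z, norm_nonneg x, ?_⟩
  ext i
  fin_cases i
  · simp [← hz, Complex.norm_mul_cos_arg, z]
  · simp [← hz, Complex.norm_mul_sin_arg, z]

lemma integral_exp_inner_polarPoint_smul_eThetaC {ρ : ℝ} (hρ : 0 < ρ) (r α : ℝ) :
    ∫ θ in (-π)..π, Complex.exp (Complex.I * ((⟪polarPoint ρ θ, polarPoint r α⟫ : ℝ) : ℂ)) •
      eThetaC (polarPoint ρ θ) = (2 * π * Complex.I * besselJ1 (ρ * r)) • angularUnit α := by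
  simp_rw [inner_polarPoint_polarPoint, eThetaC_polarPoint hρ]
  exact integral_exp_mul_cos_sub_smul_angularUnit (ρ * r) α

lemma norm_eThetaC_le_one (ξ : EuclideanSpace ℝ (Fin 2)) : ‖eThetaC ξ‖ ≤ 1 := by
  have hcoord (i : Fin 2) : |ξ i| / ‖ξ‖ ≤ 1 :=
    div_le_one_of_le₀ (PiLp.norm_apply_le ξ i) (norm_nonneg ξ)
  refine (pi_norm_le_iff_of_nonneg zero_le_one).2 fun i => ?_
  fin_cases i
  · simpa [eThetaC, abs_div] using hcoord 1
  · simpa [eThetaC, abs_div] using hcoord 0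

@[fun_prop] lemma measurable_eThetaC : Measurable eThetaC := by
  unfold eThetaC
  fun_prop

noncomputable def prodToEuclidean : (ℝ × ℝ) ≃ᵐ EuclideanSpace ℝ (Fin 2) :=
  MeasurableEquiv.finTwoArrow.symm.trans (MeasurableEquiv.toLp 2 (Fin 2 → ℝ))

lemma volume_preserving_prodToEuclidean :
    MeasurePreserving prodToEuclidean volume volume :=
  (EuclideanSpace.volume_preserving_symm_measurableEquiv_toLp (Fin 2)).symm.comp
    (volume_preserving_finTwoArrow ℝ).symm

lemma prodToEuclidean_polarCoord_symm (p : ℝ × ℝ) :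
    prodToEuclidean (polarCoord.symm p) = polarPoint p.1 p.2 := rfl

lemma measurable_polarPoint : Measurable fun p : ℝ × ℝ => polarPoint p.1 p.2 := by
  unfold polarPoint
  fun_prop

section Polar

variable {E : Type*} [NormedAddCommGroup E] [NormedSpace ℝ E]

lemma integral_eq_integral_Ioi_integral_polarPoint (f : EuclideanSpace ℝ (Fin 2) → E)
    (hf : IntegrableOn (fun p : ℝ × ℝ => p.1 • f (polarPoint p.1 p.2))
      (Set.Ioi 0 ×ˢ Set.Ioo (-π) π)) :
    ∫ ξ, f ξ = ∫ ρ in Set.Ioi 0, ∫ θ in (-π)..π, ρ • f (polarPoint ρ θ) := by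
  rw [← volume_preserving_prodToEuclidean.integral_comp prodToEuclidean.measurableEmbedding,
    ← integral_comp_polarCoord_symm, polarCoord_target, Measure.volume_eq_prod]
  simp_rw [prodToEuclidean_polarCoord_symm]
  rw [setIntegral_prod _ hf]
  refine setIntegral_congr_fun measurableSet_Ioi fun ρ _ => ?_
  rw [intervalIntegral.integral_of_le (by linarith [Real.pi_pos]), integral_Ioc_eq_integral_Ioo]

lemma integrableOn_polarPoint_of_norm_le {f : EuclideanSpace ℝ (Fin 2) → E}
    (hf : StronglyMeasurable f) {g : ℝ → ℝ}
    (hg : IntegrableOn (fun ρ => g ρ * ρ) (Set.Ioi 0)) (hfg : ∀ ξ, ‖f ξ‖ ≤ g ‖ξ‖) :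
    IntegrableOn (fun p : ℝ × ℝ => p.1 • f (polarPoint p.1 p.2))
      (Set.Ioi 0 ×ˢ Set.Ioo (-π) π) := by
  rw [IntegrableOn, Measure.volume_eq_prod, ← Measure.prod_restrict]
  refine Integrable.mono' (g := fun p : ℝ × ℝ => g p.1 * p.1) ?_
    (measurable_fst.aestronglyMeasurable.smul
      (hf.comp_measurable measurable_polarPoint).aestronglyMeasurable) ?_
  · simpa using hg.mul_prod (integrableOn_const (s := Set.Ioo (-π) π) (C := (1 : ℝ))
      measure_Ioo_lt_top.ne)
  · rw [Measure.prod_restrict]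
    filter_upwards [ae_restrict_mem (measurableSet_Ioi.prod measurableSet_Ioo)]
      with p hp
    replace hp : 0 < p.1 := hp.1
    rw [norm_smul, Real.norm_eq_abs, abs_of_pos hp, mul_comm]
    have hbound := hfg (polarPoint p.1 p.2)
    rw [norm_polarPoint hp.le] at hbound
    exact mul_le_mul_of_nonneg_right hbound hp.le

end Polar

theorem stmt_12_general (h : ℝ → ℂ) (hmeas : Measurable h)
    (hint : IntegrableOn (fun ρ : ℝ => ‖h ρ‖ * ρ) (Set.Ioi (0 : ℝ)))
    (x : EuclideanSpace ℝ (Fin 2)) :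
    (2 * Real.pi)⁻¹ • ∫ ξ : EuclideanSpace ℝ (Fin 2),
        Complex.exp (Complex.I * ((⟪ξ, x⟫ : ℝ) : ℂ)) • (((-Complex.I) * h ‖ξ‖) • eThetaC ξ)
      = (∫ ρ in Set.Ioi (0 : ℝ), h ρ * besselJ1 (ρ * ‖x‖) * (ρ : ℂ)) • eThetaC x := by
  obtain ⟨r, α, hr, rfl⟩ := exists_eq_polarPoint x
  set F : EuclideanSpace ℝ (Fin 2) → Fin 2 → ℂ := fun ξ =>
    Complex.exp (Complex.I * ((⟪ξ, polarPoint r α⟫ : ℝ) : ℂ)) •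
      (((-Complex.I) * h ‖ξ‖) • eThetaC ξ)
  have hF_meas : Measurable F := by fun_prop
  have hF_le (ξ : EuclideanSpace ℝ (Fin 2)) : ‖F ξ‖ ≤ ‖h ‖ξ‖‖ := by
    simpa [F, norm_smul] using mul_le_of_le_one_right (norm_nonneg _) (norm_eThetaC_le_one ξ)
  have hangular : ∀ ρ ∈ Set.Ioi (0 : ℝ), ∫ θ in (-π)..π, ρ • F (polarPoint ρ θ)
      = (2 * π * (h ρ * besselJ1 (ρ * r) * ρ)) • angularUnit α := by
    intro ρ (hρ : 0 < ρ)
    simp_rw [F, norm_polarPoint hρ.le, smul_comm (Complex.exp _) ((-Complex.I) * h ρ),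
      ← smul_assoc ρ]
    rw [intervalIntegral.integral_smul, integral_exp_inner_polarPoint_smul_eThetaC hρ, smul_smul,
      Complex.real_smul]
    congr 1
    linear_combination (-(2 * π * ρ * h ρ * besselJ1 (ρ * r))) * Complex.I_mul_I
  rw [integral_eq_integral_Ioi_integral_polarPoint F
      (integrableOn_polarPoint_of_norm_le hF_meas.stronglyMeasurable hint hF_le),
    setIntegral_congr_fun measurableSet_Ioi hangular, integral_smul_const, integral_const_mul,
    norm_polarPoint hr, ← smul_assoc, Complex.real_smul]
  rcases hr.eq_or_lt with rfl | hr
  · simp [besselJ1_zero]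
  · rw [eThetaC_polarPoint hr]
    congr 1
    push_cast
    have h2π : (2 * π : ℂ) ≠ 0 := mul_ne_zero two_ne_zero (Complex.ofReal_ne_zero.2 pi_ne_zero)
    rw [← mul_assoc, inv_mul_cancel₀ h2π, one_mul]

/-- The inverse Fourier transform of the isotropic divergence free wavelet
`ψ̂(ξ) = -i h(|ξ|) e_θ(ξ)` is the isotropic vortex field `h₁(|x|) e_θ(x)`. -/
theorem stmt_12 (h : ℝ → ℂ) (hmeas : Measurable h)
    (hint : IntegrableOn (fun ρ : ℝ => ‖h ρ‖ * ρ) (Set.Ioi (0 : ℝ)))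
    (x : EuclideanSpace ℝ (Fin 2)) (hx : x ≠ 0) :
    (2 * Real.pi)⁻¹ • ∫ ξ : EuclideanSpace ℝ (Fin 2),
        Complex.exp (Complex.I * ((⟪ξ, x⟫ : ℝ) : ℂ)) • (((-Complex.I) * h ‖ξ‖) • eThetaC ξ)
      = (∫ ρ in Set.Ioi (0 : ℝ), h ρ * besselJ1 (ρ * ‖x‖) * (ρ : ℂ)) • eThetaC x :=
  stmt_12_general h hmeas hint x
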